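/- Let G be a graph, r, k ∈ ℕ, and let L_S be a subordering of S ⊆ V(G) with free vertices T = V(G)\S. Suppose there exists a full right extension L' of L_S with wcol_r(G, L') ≤ k. If u ∈ T satisfies |Wreach_r(G, L_S, u)| = k, then there exists a full right extension L̄ of L_S in which u is the leftmost vertex of T and wcol_r(G, L̄) ≤ k. -/

import Mathlib

/-!
Let `L' = LS ++ t` and let `L̄` be `L'` with `u` moved to the front of `t`. Since every
subordering-reachable vertex stays reachable in a right extension, `Wsub LS u ⊆ Wfull L' u`,
and both sets have size `k`, so they are equal: from `u`, the order `L'` reaches only `u` and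
vertices of `LS`. Now compare `Wfull L̄ v` with `Wfull L' v`. Moving `u` forward does not change
the relative order of any other two vertices, so only paths through `u` can matter. If `u` is
`L̄`-leftmost on a path, the path avoids `LS`; its `L'`-leftmost vertex is weakly reachable from
`u` in `L'`, hence is `u` itself. So `Wfull L̄ v ⊆ Wfull L' v` for every `v`.
-/

open SimpleGraph

variable {V : Type*} [DecidableEq V]

/-- `u ∈ Wfull G r L v` iff `u` is weakly `r`-reachable from `v` w.r.t. the
full vertex ordering given by the list `L`. -/
def Wfull (G : SimpleGraph V) (r : ℕ) (L : List V) (v : V) : Set V :=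
  {u | ∃ p : G.Walk v u, p.IsPath ∧ p.length ≤ r ∧ ∀ w ∈ p.support, L.idxOf u ≤ L.idxOf w}

/-- Weak `r`-reachability w.r.t. a subordering `L` (a list of a subset of the vertices):
`u = v`, or `u` is ordered and there is a path of length at most `r` between `u` and `v`
all of whose ordered vertices come at or after `u`. -/
def Wsub (G : SimpleGraph V) (r : ℕ) (L : List V) (v : V) : Set V :=
  {u | u = v ∨ (u ∈ L ∧ ∃ p : G.Walk v u, p.IsPath ∧ p.length ≤ r ∧
      ∀ w ∈ p.support, w ∈ L → L.idxOf u ≤ L.idxOf w)}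

/-- The weak `r`-coloring number of the full ordering `L`. -/
noncomputable def wcolFull (G : SimpleGraph V) [Fintype V] (r : ℕ) (L : List V) : ℕ :=
  Finset.univ.sup fun v => (Wfull G r L v).ncard

/-- The weak `r`-coloring number of a subordering `L`. -/
noncomputable def wcolSub (G : SimpleGraph V) [Fintype V] (r : ℕ) (L : List V) : ℕ :=
  Finset.univ.sup fun v => (Wsub G r L v).ncard

/-- The weak `r`-coloring number of `G`: minimum over all full orderings. -/
noncomputable def wcolG (G : SimpleGraph V) [Fintype V] (r : ℕ) : ℕ :=
  sInf {k | ∃ L : List V, L.Nodup ∧ (∀ x, x ∈ L) ∧ wcolFull G r L = k}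

namespace List

variable {α : Type*} [DecidableEq α]

theorem idxOf_erase_le_idxOf_erase_iff {u x y : α} (hx : x ≠ u) (hy : y ≠ u) :
    ∀ l : List α, (l.erase u).idxOf x ≤ (l.erase u).idxOf y ↔ l.idxOf x ≤ l.idxOf y
  | [] => Iff.rfl
  | a :: l => by
    by_cases hau : a = u
    · subst hau
      rw [erase_cons_head, idxOf_cons_ne l hx.symm, idxOf_cons_ne l hy.symm]
      omega
    rw [erase_cons_tail (by simpa using hau)]
    by_cases hax : a = x
    · subst hax
      simp only [idxOf_cons_self, zero_le]
    by_cases hay : a = y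
    · subst hay
      simp only [idxOf_cons_self, idxOf_cons_ne _ hax, nonpos_iff_eq_zero, Nat.succ_ne_zero]
    simp only [idxOf_cons_ne _ hax, idxOf_cons_ne _ hay, Nat.succ_le_succ_iff,
      idxOf_erase_le_idxOf_erase_iff hx hy l]

theorem idxOf_append_lt_idxOf_append {l₁ : List α} (l₂ : List α) {x y : α} (hx : x ∈ l₁)
    (hy : y ∉ l₁) : (l₁ ++ l₂).idxOf x < (l₁ ++ l₂).idxOf y := by
  rw [idxOf_append_of_mem hx, idxOf_append_of_notMem hy]
  have := idxOf_lt_length_iff.mpr hx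
  omega

theorem mem_of_idxOf_append_cons_le {l₁ : List α} (l₂ : List α) {u w : α} (hu : u ∉ l₁)
    (hw : w ≠ u) (h : (l₁ ++ u :: l₂).idxOf w ≤ (l₁ ++ u :: l₂).idxOf u) : w ∈ l₁ := by
  by_contra hwl
  rw [idxOf_append_of_notMem hwl, idxOf_append_of_notMem hu, idxOf_cons_self,
    idxOf_cons_ne _ hw.symm] at h
  omega

end List

variable (G : SimpleGraph V) (r : ℕ)

theorem Wsub_subset_Wfull_append (LS t : List V) (u : V) :
    Wsub G r LS u ⊆ Wfull G r (LS ++ t) u := by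
  rintro w (rfl | ⟨hwLS, p, hp, hl, hmin⟩)
  · exact ⟨Walk.nil, by simp, by simp, by simp⟩
  refine ⟨p, hp, hl, fun x hx => ?_⟩
  by_cases hxLS : x ∈ LS
  · rw [List.idxOf_append_of_mem hwLS, List.idxOf_append_of_mem hxLS]
    exact hmin x hx hxLS
  · exact (List.idxOf_append_lt_idxOf_append t hwLS hxLS).le

theorem mem_Wfull_of_idxOf_le_on_path (L : List V) {v w m : V} {p : G.Walk v w}
    (hp : p.IsPath) (hl : p.length ≤ r) (hm : m ∈ p.support)
    (hmin : ∀ x ∈ p.support, L.idxOf m ≤ L.idxOf x) : m ∈ Wfull G r L w := by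
  have hm' : m ∈ p.reverse.support := by simpa using hm
  refine ⟨p.reverse.takeUntil m hm', hp.reverse.takeUntil hm',
    (p.reverse.length_takeUntil_le_length hm').trans (by simpa using hl), fun x hx => hmin x ?_⟩
  simpa using p.reverse.support_takeUntil_subset_support hm' hx

variable {G r}

section MoveForward

variable {LS t : List V} {u v : V}

theorem mem_Wfull_append_of_mem_Wfull_moveForward_of_ne {w : V} (hu : u ∉ LS)
    (hwu : w ≠ u) (hw : w ∈ Wfull G r (LS ++ u :: t.erase u) v) :
    w ∈ Wfull G r (LS ++ t) v := by
  obtain ⟨p, hp, hl, hmin⟩ := hw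
  have herase : (LS ++ u :: t.erase u).erase u = (LS ++ t).erase u := by
    rw [List.erase_append_right _ hu, List.erase_append_right _ hu, List.erase_cons_head]
  refine ⟨p, hp, hl, fun x hx => ?_⟩
  by_cases hxu : x = u
  · subst hxu
    exact (List.idxOf_append_lt_idxOf_append t
      (List.mem_of_idxOf_append_cons_le _ hu hwu (hmin x hx)) hu).le
  · rw [← List.idxOf_erase_le_idxOf_erase_iff hwu hxu, ← herase,
      List.idxOf_erase_le_idxOf_erase_iff hwu hxu]
    exact hmin x hx

theorem self_mem_Wfull_append_of_mem_Wfull_moveForward (hu : u ∉ LS)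
    (hWu : Wfull G r (LS ++ t) u ⊆ Wsub G r LS u)
    (hw : u ∈ Wfull G r (LS ++ u :: t.erase u) v) : u ∈ Wfull G r (LS ++ t) v := by
  obtain ⟨p, hp, hl, hmin⟩ := hw
  obtain ⟨m, hm, hmmin⟩ := p.support.toFinset.exists_min_image (fun x => (LS ++ t).idxOf x)
    ⟨v, List.mem_toFinset.mpr p.start_mem_support⟩
  have hm' : m ∈ p.support := List.mem_toFinset.mp hm
  have hmmin' : ∀ x ∈ p.support, (LS ++ t).idxOf m ≤ (LS ++ t).idxOf x :=
    fun x hx => hmmin x (List.mem_toFinset.mpr hx)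
  have hmu : m = u := by
    rcases hWu (mem_Wfull_of_idxOf_le_on_path G r _ hp hl hm' hmmin') with h | ⟨hmLS, -⟩
    · exact h
    · exact absurd (hmin m hm') (List.idxOf_append_lt_idxOf_append _ hmLS hu).not_ge
  exact ⟨p, hp, hl, hmu ▸ hmmin'⟩

theorem Wfull_moveForward_subset (hu : u ∉ LS)
    (hWu : Wfull G r (LS ++ t) u ⊆ Wsub G r LS u) :
    Wfull G r (LS ++ u :: t.erase u) v ⊆ Wfull G r (LS ++ t) v := fun w hw => by
  by_cases hwu : w = u
  · subst hwu
    exact self_mem_Wfull_append_of_mem_Wfull_moveForward hu hWu hw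
  · exact mem_Wfull_append_of_mem_Wfull_moveForward_of_ne hu hwu hw

end MoveForward

section Fintype

variable [Fintype V]

theorem ncard_Wfull_le_wcolFull (L : List V) (v : V) : (Wfull G r L v).ncard ≤ wcolFull G r L :=
  Finset.le_sup (f := fun v => (Wfull G r L v).ncard) (Finset.mem_univ v)

theorem wcolFull_le_wcolFull_of_subset {L L' : List V}
    (h : ∀ v, Wfull G r L v ⊆ Wfull G r L' v) : wcolFull G r L ≤ wcolFull G r L' :=
  Finset.sup_le fun v _ =>
    (Set.ncard_le_ncard (h v) (Set.toFinite _)).trans (ncard_Wfull_le_wcolFull L' v)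

end Fintype

theorem stmt6_general [Fintype V] (G : SimpleGraph V) (r k : ℕ) (LS : List V)
    (L' : List V) (hL' : L'.Nodup) (hfull : ∀ x, x ∈ L')
    (hext : ∃ t : List V, L' = LS ++ t)
    (hw : wcolFull G r L' ≤ k)
    (u : V) (hu : u ∉ LS) (hcard : (Wsub G r LS u).ncard = k) :
    ∃ Lbar : List V, Lbar.Nodup ∧ (∀ x, x ∈ Lbar) ∧
      (∃ t : List V, Lbar = LS ++ u :: t) ∧ wcolFull G r Lbar ≤ k := by
  obtain ⟨t, rfl⟩ := hext
  have hut : u ∈ t := (List.mem_append.mp (hfull u)).resolve_left hu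
  have hperm : (LS ++ t).Perm (LS ++ u :: t.erase u) :=
    (List.perm_cons_erase hut).append_left LS
  have hWu : Wfull G r (LS ++ t) u = Wsub G r LS u :=
    (Set.eq_of_subset_of_ncard_le (Wsub_subset_Wfull_append G r LS t u)
      (hcard ▸ (ncard_Wfull_le_wcolFull _ u).trans hw)).symm
  exact ⟨_, hperm.nodup_iff.mp hL', fun x => hperm.mem_iff.mp (hfull x), ⟨_, rfl⟩,
    (wcolFull_le_wcolFull_of_subset fun _ => Wfull_moveForward_subset hu hWu.subset).trans hw⟩

theorem stmt6 [Fintype V] (G : SimpleGraph V) (r k : ℕ) (LS : List V) (hLS : LS.Nodup)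
    (L' : List V) (hL' : L'.Nodup) (hfull : ∀ x, x ∈ L')
    (hext : ∃ t : List V, L' = LS ++ t)
    (hw : wcolFull G r L' ≤ k)
    (u : V) (hu : u ∉ LS) (hcard : (Wsub G r LS u).ncard = k) :
    ∃ Lbar : List V, Lbar.Nodup ∧ (∀ x, x ∈ Lbar) ∧
      (∃ t : List V, Lbar = LS ++ u :: t) ∧ wcolFull G r Lbar ≤ k :=
  stmt6_general G r k LS L' hL' hfull hext hw u hu hcard
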